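/- Suppose that for any sequence of queries, the conditional mutual information of each query given previous responses is at most the unconditioned mutual information of that query (submodularity), and suppose Q* is a global maximizer of the one-step objective I(q;ω|Q) − c(Q) over queries Q, with I(q;ω|Q*) − c(Q*) < 0. Then for every k ≥ 0 and every sequence of queries Q_n,…,Q_{n+k}, the cumulative reward I(q_n,…,q_{n+k}; ω | Q_n,…,Q_{n+k}) − Σ_{i=0}^{k} c(Q_{n+i}) is negative. -/

import Mathlib

open Finset

theorem optimal_stopping_negative_general
    {Query : Type*}
    (I1 : Query → ℝ) (c : Query → ℝ)
    (Qstar : Query)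
    (hmax : ∀ Q, I1 Q - c Q ≤ I1 Qstar - c Qstar)
    (hneg : I1 Qstar - c Qstar < 0)
    (k : ℕ) (Qs : Fin (k + 1) → Query)
    (Itot : ℝ) (condI : Fin (k + 1) → ℝ)
    (hchain : Itot = ∑ j, condI j)
    (hsubmod : ∀ j, condI j ≤ I1 (Qs j)) :
    Itot - ∑ i, c (Qs i) < 0 := by
  rw [hchain, ← sum_sub_distrib]
  refine sum_neg (fun j _ ↦ ?_) univ_nonempty
  calc condI j - c (Qs j) ≤ I1 (Qs j) - c (Qs j) := sub_le_sub_right (hsubmod j) _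
    _ ≤ I1 Qstar - c Qstar := hmax (Qs j)
    _ < 0 := hneg

/-- negative optimum ⟹ all horizons negative: Suppose each query `Q`
has nonnegative one-step information `I1 Q` and positive cost `c Q`, `Qstar` globally
maximizes `I1 Q − c Q` with negative optimal value. If the cumulative information
`Itot` of any sequence of queries decomposes via the chain rule into conditional
terms `condI` each bounded by the corresponding one-step information (submodularity),
then the cumulative reward is negative. -/
theorem optimal_stopping_negative
    {Query : Type*}
    (I1 : Query → ℝ) (c : Query → ℝ)
    (hI1 : ∀ Q, 0 ≤ I1 Q) (hc : ∀ Q, 0 < c Q)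
    (Qstar : Query)
    (hmax : ∀ Q, I1 Q - c Q ≤ I1 Qstar - c Qstar)
    (hneg : I1 Qstar - c Qstar < 0)
    (k : ℕ) (Qs : Fin (k + 1) → Query)
    (Itot : ℝ) (condI : Fin (k + 1) → ℝ)
    (hchain : Itot = ∑ j, condI j)
    (hsubmod : ∀ j, condI j ≤ I1 (Qs j)) :
    Itot - ∑ i, c (Qs i) < 0 :=
  optimal_stopping_negative_general I1 c Qstar hmax hneg k Qs Itot condI hchain hsubmod
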